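/- Let 𝔪 = (Δ₁, …, Δ_N) and 𝔫 = (Δ'₁, …, Δ'_{N'}) be ladder multisegments (both aligned with strictly decreasing endpoints). With X, Y and ↝ as in the two-ladder setting, the condition NC(𝔪,𝔫) — there exist i, j, k ≥ 0 with (i+l, j+l) ∈ X for 0 ≤ l ≤ k, (i−1, j) ∉ Y, (i+k, j+k+1) ∉ Y — is equivalent to the stronger condition NC'(𝔪,𝔫): there exist i, j, k ≥ 0 with (i+l, j+l) ∈ X for 0 ≤ l ≤ k, (i−1, j) ∉ Y, (i+k, j+k+1) ∉ Y, and additionally (i+l, j+l+1) ∈ Y \ X for all 0 ≤ l ≤ k−1. -/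
import Mathlib


/-- A segment `[a, b]` of integers (meaningful when `a ≤ b`). -/
structure Seg where
  a : ℤ
  b : ℤ
deriving DecidableEq

/-- `Δ` is a genuine segment, i.e. `a ≤ b`. -/
def Seg.IsSeg (Δ : Seg) : Prop := Δ.a ≤ Δ.b

/-- Containment of segments `Δ ⊆ Δ'`. -/
def Seg.Sub (Δ Δ' : Seg) : Prop := Δ'.a ≤ Δ.a ∧ Δ.b ≤ Δ'.b

/-- `Δ` and `Δ'` are linked: their union is again a segment (interval) but neither is
contained in the other. -/
def Seg.Linked (Δ Δ' : Seg) : Prop :=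
  max Δ.a Δ'.a ≤ min Δ.b Δ'.b + 1 ∧ ¬ Δ.Sub Δ' ∧ ¬ Δ'.Sub Δ

/-- `Δ` precedes `Δ'` (`Δ ≺ Δ'`): they are linked and `Δ` starts strictly earlier. -/
def Seg.Prec (Δ Δ' : Seg) : Prop := Δ.Linked Δ' ∧ Δ.a < Δ'.a

/-- The shifted segment `Δ - 1 = [a-1, b-1]`. -/
def Seg.shift (Δ : Seg) : Seg := ⟨Δ.a - 1, Δ.b - 1⟩

/-- There exists a matching function from `X` into `Y` for the relation `R`
(read `R q p` as `q ↝ p`): an injective `f : X → Y` with `f p ↝ p` for all `p ∈ X`. -/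
def ExistsMatching {ι : Type*} (X Y : Set ι) (R : ι → ι → Prop) : Prop :=
  ∃ f : X → Y, Function.Injective f ∧ ∀ p : X, R (f p : ι) (p : ι)

lemma seg_prec_iff {Δ Δ' : Seg} (h : Δ.IsSeg) (h' : Δ'.IsSeg) :
    Δ.Prec Δ' ↔ Δ.a < Δ'.a ∧ Δ'.a ≤ Δ.b + 1 ∧ Δ.b < Δ'.b := by
  unfold Seg.Prec Seg.Linked Seg.Sub Seg.IsSeg at *
  omega

lemma seg_shift_prec_iff {Δ Δ' : Seg} (h : Δ.IsSeg) (h' : Δ'.IsSeg) :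
    Δ.shift.Prec Δ' ↔ Δ.a ≤ Δ'.a ∧ Δ'.a ≤ Δ.b ∧ Δ.b ≤ Δ'.b := by
  unfold Seg.shift Seg.Prec Seg.Linked Seg.Sub Seg.IsSeg at *
  dsimp only
  omega

lemma pair_congr {S : Set (ℤ × ℤ)} {x y x' y' : ℤ} (h : (x, y) ∈ S)
    (hx : x = x') (hy : y = y') : (x', y') ∈ S := hx ▸ hy ▸ h

/-- For two ladders, with `X = {(i,j) : Δ_i ≺ Δ'_j}` and `Y = {(i,j) : (Δ_i − 1) ≺ Δ'_j}`,
the condition `NC(𝔪,𝔫)` (∃ i, j, k with `(i+l, j+l) ∈ X` for `0 ≤ l ≤ k`, `(i−1,j) ∉ Y`,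
`(i+k, j+k+1) ∉ Y`) is equivalent to the stronger `NC'(𝔪,𝔫)` requiring additionally
`(i+l, j+l+1) ∈ Y \ X` for `0 ≤ l ≤ k−1`. -/
theorem NC_iff_NC' (N N' : ℤ) (m n : ℤ → Seg)
    (hm : ∀ i, 0 ≤ i → i < N → (m i).IsSeg)
    (hn : ∀ j, 0 ≤ j → j < N' → (n j).IsSeg)
    (hmladder : ∀ i j, 0 ≤ i → i < j → j < N → (m j).a < (m i).a ∧ (m j).b < (m i).b)
    (hnladder : ∀ i j, 0 ≤ i → i < j → j < N' → (n j).a < (n i).a ∧ (n j).b < (n i).b) :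
    (∃ i j : ℤ, ∃ k : ℕ,
        (∀ l : ℕ, l ≤ k → (i + (l : ℤ), j + (l : ℤ)) ∈
          {p : ℤ × ℤ | 0 ≤ p.1 ∧ p.1 < N ∧ 0 ≤ p.2 ∧ p.2 < N' ∧ (m p.1).Prec (n p.2)}) ∧
        (i - 1, j) ∉
          {p : ℤ × ℤ | 0 ≤ p.1 ∧ p.1 < N ∧ 0 ≤ p.2 ∧ p.2 < N' ∧ (m p.1).shift.Prec (n p.2)} ∧
        (i + (k : ℤ), j + (k : ℤ) + 1) ∉
          {p : ℤ × ℤ | 0 ≤ p.1 ∧ p.1 < N ∧ 0 ≤ p.2 ∧ p.2 < N' ∧ (m p.1).shift.Prec (n p.2)}) ↔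
    (∃ i j : ℤ, ∃ k : ℕ,
        (∀ l : ℕ, l ≤ k → (i + (l : ℤ), j + (l : ℤ)) ∈
          {p : ℤ × ℤ | 0 ≤ p.1 ∧ p.1 < N ∧ 0 ≤ p.2 ∧ p.2 < N' ∧ (m p.1).Prec (n p.2)}) ∧
        (i - 1, j) ∉
          {p : ℤ × ℤ | 0 ≤ p.1 ∧ p.1 < N ∧ 0 ≤ p.2 ∧ p.2 < N' ∧ (m p.1).shift.Prec (n p.2)} ∧
        (i + (k : ℤ), j + (k : ℤ) + 1) ∉
          {p : ℤ × ℤ | 0 ≤ p.1 ∧ p.1 < N ∧ 0 ≤ p.2 ∧ p.2 < N' ∧ (m p.1).shift.Prec (n p.2)} ∧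
        (∀ l : ℕ, l < k →
          (i + (l : ℤ), j + (l : ℤ) + 1) ∈
            {p : ℤ × ℤ | 0 ≤ p.1 ∧ p.1 < N ∧ 0 ≤ p.2 ∧ p.2 < N' ∧ (m p.1).shift.Prec (n p.2)} ∧
          (i + (l : ℤ), j + (l : ℤ) + 1) ∉
            {p : ℤ × ℤ | 0 ≤ p.1 ∧ p.1 < N ∧ 0 ≤ p.2 ∧ p.2 < N' ∧ (m p.1).Prec (n p.2)})) := by
  classical
  set XS : Set (ℤ × ℤ) :=
    {p : ℤ × ℤ | 0 ≤ p.1 ∧ p.1 < N ∧ 0 ≤ p.2 ∧ p.2 < N' ∧ (m p.1).Prec (n p.2)} with hXSdef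
  set YS : Set (ℤ × ℤ) :=
    {p : ℤ × ℤ | 0 ≤ p.1 ∧ p.1 < N ∧ 0 ≤ p.2 ∧ p.2 < N' ∧ (m p.1).shift.Prec (n p.2)} with hYSdef
  -- membership characterizations
  have hXmem : ∀ p q : ℤ, (p, q) ∈ XS ↔
      (0 ≤ p ∧ p < N ∧ 0 ≤ q ∧ q < N' ∧
        ((m p).a < (n q).a ∧ (n q).a ≤ (m p).b + 1 ∧ (m p).b < (n q).b)) := by
    intro p q
    constructor
    · rintro ⟨h1, h2, h3, h4, h5⟩
      exact ⟨h1, h2, h3, h4, (seg_prec_iff (hm p h1 h2) (hn q h3 h4)).mp h5⟩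
    · rintro ⟨h1, h2, h3, h4, h5⟩
      exact ⟨h1, h2, h3, h4, (seg_prec_iff (hm p h1 h2) (hn q h3 h4)).mpr h5⟩
  have hYmem : ∀ p q : ℤ, (p, q) ∈ YS ↔
      (0 ≤ p ∧ p < N ∧ 0 ≤ q ∧ q < N' ∧
        ((m p).a ≤ (n q).a ∧ (n q).a ≤ (m p).b ∧ (m p).b ≤ (n q).b)) := by
    intro p q
    constructor
    · rintro ⟨h1, h2, h3, h4, h5⟩
      exact ⟨h1, h2, h3, h4, (seg_shift_prec_iff (hm p h1 h2) (hn q h3 h4)).mp h5⟩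
    · rintro ⟨h1, h2, h3, h4, h5⟩
      exact ⟨h1, h2, h3, h4, (seg_shift_prec_iff (hm p h1 h2) (hn q h3 h4)).mpr h5⟩
  constructor
  swap
  · rintro ⟨i, j, k, h1, h2, h3, _⟩
    exact ⟨i, j, k, h1, h2, h3⟩
  rintro ⟨i0, j0, k0, h0d, h0l, h0r⟩
  -- the key claim, by strong induction on k
  have key : ∀ k : ℕ, ∀ i j : ℤ,
      (∀ l : ℕ, l ≤ k → (i + (l : ℤ), j + (l : ℤ)) ∈ XS) →
      (i - 1, j) ∉ YS → (i + (k : ℤ), j + (k : ℤ) + 1) ∉ YS →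
      (∃ i' j' : ℤ, ∃ k' : ℕ,
        (∀ l : ℕ, l ≤ k' → (i' + (l : ℤ), j' + (l : ℤ)) ∈ XS) ∧
        (i' - 1, j') ∉ YS ∧
        (i' + (k' : ℤ), j' + (k' : ℤ) + 1) ∉ YS ∧
        (∀ l : ℕ, l < k' →
          (i' + (l : ℤ), j' + (l : ℤ) + 1) ∈ YS ∧
          (i' + (l : ℤ), j' + (l : ℤ) + 1) ∉ XS)) := by
    intro k
    induction k using Nat.strong_induction_on with
    | _ k IH =>
      intro i j hdiag hleft hright
      -- ℤ-level diagonal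
      have hdiagZ : ∀ l : ℤ, 0 ≤ l → l ≤ (k : ℤ) → (i + l, j + l) ∈ XS := by
        intro l h1 h2
        lift l to ℕ using h1
        exact hdiag l (by exact_mod_cast h2)
      by_cases hYfull : ∀ l : ℕ, l < k → (i + (l : ℤ), j + (l : ℤ) + 1) ∈ YS
      swap
      · push_neg at hYfull
        obtain ⟨l, hlk, hnotY⟩ := hYfull
        exact IH l hlk i j (fun l' hl' => hdiag l' (by omega)) hleft hnotY
      have hYfullZ : ∀ l : ℤ, 0 ≤ l → l < (k : ℤ) → (i + l, j + l + 1) ∈ YS := by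
        intro l h1 h2
        lift l to ℕ using h1
        exact hYfull l (by exact_mod_cast h2)
      by_cases hOff : ∃ l : ℕ, l < k ∧ (i + (l : ℤ), j + (l : ℤ) + 1) ∈ XS
      swap
      · push_neg at hOff
        exact ⟨i, j, k, hdiag, hleft, hright, fun l hl => ⟨hYfull l hl, hOff l hl⟩⟩
      -- minimal offender lmin
      set lmin : ℕ := Nat.find hOff with hlmindef
      obtain ⟨hlmk, hlmX⟩ : lmin < k ∧ (i + (lmin : ℤ), j + (lmin : ℤ) + 1) ∈ XS :=
        Nat.find_spec hOff
      have hlmin_min : ∀ l : ℤ, 0 ≤ l → l < (lmin : ℤ) → (i + l, j + l + 1) ∉ XS := by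
        intro l h1 h2 hmem
        lift l to ℕ using h1
        have h2' : l < lmin := by exact_mod_cast h2
        exact Nat.find_min hOff h2' ⟨by omega, hmem⟩
      -- run length t
      have hQex : ∃ s : ℕ, ¬(lmin + s + 1 < k ∧
          (i + ((lmin + s + 1 : ℕ) : ℤ), j + ((lmin + s + 1 : ℕ) : ℤ) + 1) ∈ XS) :=
        ⟨k, fun h => by omega⟩
      set t : ℕ := Nat.find hQex with htdef
      have htspec : ¬(lmin + t + 1 < k ∧
          (i + ((lmin + t + 1 : ℕ) : ℤ), j + ((lmin + t + 1 : ℕ) : ℤ) + 1) ∈ XS) :=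
        Nat.find_spec hQex
      have hchain : ∀ s : ℕ, s ≤ t →
          lmin + s < k ∧ (i + ((lmin + s : ℕ) : ℤ), j + ((lmin + s : ℕ) : ℤ) + 1) ∈ XS := by
        intro s hs
        cases s with
        | zero => exact ⟨hlmk, by simpa using hlmX⟩
        | succ s' =>
          have h := Nat.find_min hQex (show s' < t by omega)
          rw [not_not] at h
          exact ⟨by omega, by exact_mod_cast h.2⟩
      have hchainZ : ∀ s : ℤ, 0 ≤ s → s ≤ (t : ℤ) →
          (lmin : ℤ) + s < k ∧ (i + ((lmin : ℤ) + s), j + ((lmin : ℤ) + s) + 1) ∈ XS := by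
        intro s h1 h2
        lift s to ℕ using h1
        obtain ⟨hc1, hc2⟩ := hchain s (by exact_mod_cast h2)
        exact ⟨by exact_mod_cast hc1, pair_congr hc2 (by push_cast; ring) (by push_cast; ring)⟩
      have hltk : (lmin : ℤ) + (t : ℤ) < k := (hchainZ t (by positivity) le_rfl).1
      -- abbreviations
      set L : ℤ := (lmin : ℤ) with hLdef
      have hL0 : 0 ≤ L := by positivity
      -- new witness (i + L, j + L + 1, t); apply IH at t < k
      have htk : t < k := by omega
      apply IH t htk (i + L) (j + L + 1)
      · -- diagonal of new witness
        intro s hs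
        have := (hchainZ s (by positivity) (by exact_mod_cast hs)).2
        exact pair_congr this (by ring) (by ring)
      · -- left condition : (i + L - 1, j + L + 1) ∉ YS
        intro hY
        rw [hYmem] at hY
        obtain ⟨hY1, hY2, hY3, hY4, hY5a, hY5b, hY5c⟩ := hY
        -- facts at the offender point (i+L, j+L+1) ∈ XS
        have hXlm := (hXmem _ _).mp hlmX
        -- diagonal point at L
        have hdL := (hXmem _ _).mp (hdiagZ L hL0 (by omega))
        rcases eq_or_lt_of_le hL0 with hL0' | hLpos
        · -- L = 0 case
          have hLz : L = 0 := hL0'.symm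
          rw [hLz] at hY1 hY2 hY3 hY4 hY5a hY5b hY5c hXlm hdL
          simp only [add_zero, zero_add] at hY1 hY2 hY3 hY4 hY5a hY5b hY5c hXlm hdL
          -- need k ≥ 1
          have hk1 : (1 : ℤ) ≤ (k : ℤ) := by omega
          have hd1 := (hXmem _ _).mp (hdiagZ 1 (by norm_num) hk1)
          -- ladders
          have hb : (m i).b < (m (i - 1)).b :=
            (hmladder (i - 1) i (by omega) (by omega) hdL.2.1).2
          have hc : (n (j + 1)).a < (n j).a ∧ (n (j + 1)).b < (n j).b :=
            hnladder j (j + 1) hdL.2.2.1 (by omega) hd1.2.2.2.1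
          apply hleft
          rw [hYmem]
          refine ⟨by omega, by omega, hdL.2.2.1, hdL.2.2.2.1, ?_, ?_, ?_⟩ <;> omega
        · -- L > 0 case : (i + L - 1, j + L) ∈ YS \ XS
          have hYprev := (hYmem _ _).mp (hYfullZ (L - 1) (by omega) (by omega))
          have hXprev : (i + (L - 1), j + (L - 1) + 1) ∉ XS :=
            hlmin_min (L - 1) (by omega) (by omega)
          rw [hXmem] at hXprev
          push_neg at hXprev
          -- normalize indices : i + (L-1) = i + L - 1, j + (L-1) + 1 = j + L
          rw [show i + (L - 1) = i + L - 1 by ring, show j + (L - 1) + 1 = j + L by ring]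
            at hYprev hXprev
          -- ladders on n at j + L
          have hd1 := (hXmem _ _).mp (hdiagZ (L + 1) (by omega) (by omega))
          have hcd : (n (j + L + 1)).a < (n (j + L)).a ∧ (n (j + L + 1)).b < (n (j + L)).b := by
            refine hnladder (j + L) (j + L + 1) hdL.2.2.1 (by omega) ?_
            have := hd1.2.2.2.1
            omega
          obtain ⟨hp1, hp2, hp3, hp4, hp5a, hp5b, hp5c⟩ := hYprev
          have := hXprev hp1 hp2 hp3 hp4
          omega
      · -- right condition : (i + L + t, j + L + 1 + t + 1) ∉ YS
        intro hY
        rw [hYmem] at hY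
        obtain ⟨hY1, hY2, hY3, hY4, hY5a, hY5b, hY5c⟩ := hY
        set T : ℤ := (t : ℤ) with hTdef
        have hT0 : 0 ≤ T := by positivity
        -- offender at L + T : (i + (L + T), j + (L + T) + 1) ∈ XS
        have hXend := (hXmem _ _).mp (hchainZ T hT0 le_rfl).2
        -- normalize hY indices : i + L + T , j + L + T + 2
        rw [show j + L + 1 + T + 1 = j + (L + T) + 2 by ring] at hY3 hY4 hY5a hY5b hY5c
        rw [show i + L + T = i + (L + T) by ring] at hY1 hY2 hY5a hY5b hY5c
        -- ladder facts
        have hdLT := (hXmem _ _).mp (hdiagZ (L + T) (by omega) (by omega))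
        have hab : (m (i + (L + T) + 1)).a < (m (i + (L + T))).a ∧
            (m (i + (L + T) + 1)).b < (m (i + (L + T))).b := by
          have hd1 := (hXmem _ _).mp (hdiagZ (L + T + 1) (by omega) (by omega))
          rw [show i + (L + T + 1) = i + (L + T) + 1 by ring] at hd1
          exact hmladder (i + (L + T)) (i + (L + T) + 1) hdLT.1 (by omega) hd1.2.1
        have hcd : (n (j + (L + T) + 2)).a < (n (j + (L + T) + 1)).a ∧
            (n (j + (L + T) + 2)).b < (n (j + (L + T) + 1)).b :=
          hnladder (j + (L + T) + 1) (j + (L + T) + 2) hXend.2.2.1 (by omega) hY4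
        rcases Nat.lt_or_ge (lmin + t + 1) k with hcase | hcase
        · -- interior case : (i + (L+T) + 1, j + (L+T) + 2) ∈ YS \ XS
          have hnX : ¬(lmin + t + 1 < k ∧
              (i + ((lmin + t + 1 : ℕ) : ℤ), j + ((lmin + t + 1 : ℕ) : ℤ) + 1) ∈ XS) := htspec
          have hXn : (i + (L + T + 1), j + (L + T + 1) + 1) ∉ XS := by
            intro hmem
            exact hnX ⟨hcase, pair_congr hmem (by push_cast; ring) (by push_cast; ring)⟩
          have hYn := (hYmem _ _).mp (hYfullZ (L + T + 1) (by omega) (by rw [hLdef, hTdef]; exact_mod_cast hcase))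
          rw [hXmem] at hXn
          push_neg at hXn
          rw [show i + (L + T + 1) = i + (L + T) + 1 by ring,
              show j + (L + T + 1) + 1 = j + (L + T) + 2 by ring] at hXn hYn
          obtain ⟨hq1, hq2, hq3, hq4, hq5a, hq5b, hq5c⟩ := hYn
          have := hXn hq1 hq2 hq3 hq4
          omega
        · -- end case : lmin + t + 1 = k ; contradict hright
          have hkeq : L + T + 1 = (k : ℤ) := by omega
          apply hright
          rw [hYmem]
          have hdk := (hXmem _ _).mp (hdiagZ (k : ℤ) (by positivity) le_rfl)
          rw [show i + (k : ℤ) = i + (L + T) + 1 by omega,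
              show j + (k : ℤ) = j + (L + T) + 1 by omega] at hdk ⊢
          rw [show j + (L + T) + 1 + 1 = j + (L + T) + 2 by ring]
          refine ⟨hdk.1, hdk.2.1, by omega, hY4, ?_, ?_, ?_⟩ <;> omega
  obtain ⟨i', j', k', hd, hl, hr, hextra⟩ := key k0 i0 j0 h0d h0l h0r
  exact ⟨i', j', k', hd, hl, hr, fun l hlk => ⟨(hextra l hlk).1, (hextra l hlk).2⟩⟩
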